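/- Let S be a subgraph of a graph G, L a list assignment for G, and G₁ a connected component of G. If G is S-critical with respect to L, then G₁ is (S ∩ G₁)-critical with respect to L. -/

import Mathlib

open SimpleGraph

/-- An `L`-coloring of the subgraph `H` of `G`: colors from the lists, proper on `H`. -/
def ListColoringOn {V : Type} (G : SimpleGraph V) (L : V → Finset ℕ) (H : G.Subgraph)
    (φ : V → ℕ) : Prop :=
  (∀ v ∈ H.verts, φ v ∈ L v) ∧ ∀ ⦃u w : V⦄, H.Adj u w → φ u ≠ φ w

/-- The coloring `ψ` of `S` extends to an `L`-coloring of the subgraph `H`. -/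
def ExtendsToSub {V : Type} (G : SimpleGraph V) (L : V → Finset ℕ) (S H : G.Subgraph)
    (ψ : V → ℕ) : Prop :=
  ∃ φ : V → ℕ, ListColoringOn G L H φ ∧ ∀ v ∈ S.verts, φ v = ψ v

/-- `Amb` is `S`-critical w.r.t. `L`: every proper subgraph `H` with `S ⊆ H ⊂ Amb` admits an
`L`-coloring of `S` that extends to `H` but not to `Amb`. -/
def IsCriticalRel {V : Type} (G : SimpleGraph V) (L : V → Finset ℕ) (Amb S : G.Subgraph) : Prop :=
  ∀ H : G.Subgraph, S ≤ H → H < Amb →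
    ∃ ψ : V → ℕ, ListColoringOn G L S ψ ∧ ExtendsToSub G L S H ψ ∧ ¬ ExtendsToSub G L S Amb ψ

/-- `G` is `S`-critical with respect to `L`. -/
def IsCriticalSub {V : Type} (G : SimpleGraph V) (L : V → Finset ℕ) (S : G.Subgraph) : Prop :=
  IsCriticalRel G L ⊤ S

/-- The edgeless subgraph on a set `S` of vertices. -/
def vertsSub {V : Type} (G : SimpleGraph V) (S : Set V) : G.Subgraph where
  verts := S
  Adj _ _ := False
  adj_sub h := h.elim
  edge_vert h := h.elim
  symm := ⟨fun _ _ h => h.elim⟩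

/-- `G` has a proper coloring from the lists `L`. -/
def LColorable {V : Type} (G : SimpleGraph V) (L : V → Finset ℕ) : Prop :=
  ∃ φ : V → ℕ, (∀ v, φ v ∈ L v) ∧ ∀ ⦃u w : V⦄, G.Adj u w → φ u ≠ φ w

/-- Abstract data of a graph embedded in the plane/sphere: the graph, its faces,
the outer face and the vertex–face incidence relation. -/
structure PlaneGraph (V : Type) where
  G : SimpleGraph V
  Face : Type
  outer : Face
  incident : V → Face → Prop

/-- If `G` is `S`-critical w.r.t. `L` and `G₁` is a connected component of `G`,
then `G₁` is `(S ∩ G₁)`-critical w.r.t. `L`. -/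
theorem critical_component {V : Type} (G : SimpleGraph V) (L : V → Finset ℕ)
    (S : G.Subgraph) (hcrit : IsCriticalSub G L S)
    (K : G.ConnectedComponent) :
    IsCriticalRel G L ((⊤ : G.Subgraph).induce K.supp)
      (S ⊓ (⊤ : G.Subgraph).induce K.supp) := by
  classical
  intro H hSH hHlt
  set s := K.supp with hs
  have hsame : ∀ {u w : V}, G.Adj u w → (u ∈ s ↔ w ∈ s) := by
    intro u w h
    simp only [hs, ConnectedComponent.mem_supp_iff]
    rw [ConnectedComponent.sound h.reachable]
  set H' : G.Subgraph := H ⊔ (⊤ : G.Subgraph).induce sᶜ with hH'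
  have hSH' : S ≤ H' := by
    constructor
    · intro v hv
      by_cases hvs : v ∈ s
      · exact Or.inl (hSH.1 ⟨hv, hvs⟩)
      · exact Or.inr hvs
    · intro u w h
      by_cases hus : u ∈ s
      · have hws : w ∈ s := (hsame (S.adj_sub h)).mp hus
        exact Or.inl (hSH.2 ⟨h, hus, hws, S.adj_sub h⟩)
      · have hws : w ∉ s := fun hw => hus ((hsame (S.adj_sub h)).mpr hw)
        exact Or.inr ⟨hus, hws, S.adj_sub h⟩
  have hH'lt : H' < ⊤ := by
    rw [lt_top_iff_ne_top]
    intro hEq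
    apply hHlt.not_ge
    constructor
    · intro v hv
      have hv' : v ∈ H'.verts := by rw [hEq]; trivial
      rcases hv' with h | h
      · exact h
      · exact absurd hv h
    · intro u w h
      have h' : H'.Adj u w := by rw [hEq]; exact h.2.2
      rcases h' with h' | h'
      · exact h'
      · exact absurd h.1 h'.1
  obtain ⟨ψ, hψcol, ⟨φ, hφ, hagr⟩, hψnot⟩ := hcrit H' hSH' hH'lt
  refine ⟨ψ, ⟨fun v hv => hψcol.1 v hv.1, fun u w h => hψcol.2 h.1⟩,
    ⟨φ, ⟨fun v hv => hφ.1 v (Or.inl hv), fun u w h => hφ.2 (Or.inl h)⟩,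
      fun v hv => hagr v hv.1⟩, ?_⟩
  rintro ⟨θ, hθ, hθagr⟩
  apply hψnot
  refine ⟨fun v => if v ∈ s then θ v else φ v, ⟨?_, ?_⟩, ?_⟩
  · intro v _
    by_cases hvs : v ∈ s
    · simpa [hvs] using hθ.1 v hvs
    · simpa [hvs] using hφ.1 v (Or.inr hvs)
  · intro u w h
    have hG : G.Adj u w := h.adj_sub
    by_cases hus : u ∈ s
    · have hws : w ∈ s := (hsame hG).mp hus
      simpa [hus, hws] using hθ.2 ⟨hus, hws, by simpa using hG⟩
    · have hws : w ∉ s := fun hw => hus ((hsame hG).mpr hw)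
      simpa [hus, hws] using hφ.2 (Or.inr ⟨hus, hws, by simpa using hG⟩)
  · intro v hv
    by_cases hvs : v ∈ s
    · simpa [hvs] using hθagr v ⟨hv, hvs⟩
    · simpa [hvs] using hagr v hv
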